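/- arXiv:2008.04153 — 2 statements merged into one kernel-verified Lean document; each statement's English description precedes it below -/
import Mathlib

section
/- Let A = {a_s(n_s)}_{s=1}^k be a finite system of residue classes, set N_A = lcm(n_1,...,n_k), and for z ∈ ℤ set I_z = {1 ≤ s ≤ k : z ≡ a_s (mod n_s)}. Let m_1,...,m_k ∈ ℤ, let F be a field containing an element ζ of multiplicative order N_A, and let f(x_1,...,x_k) be a polynomial over F with deg f ≤ m(A). For θ ∈ [0,1) define ψ(θ) = ∑ (−1)^{|I|} f([[1∈I]],...,[[k∈I]]) ζ^{N_A ∑_{s∈I} a_s m_s/n_s}, the sum over all I ⊆ {1,...,k} with fractional part {∑_{s∈I} m_s/n_s} = θ (note each exponent N_A ∑_{s∈I} a_s m_s/n_s is an integer). If for every z ∈ ℤ the coefficient of the monomial ∏_{s∈I_z} x_s in f is zero, then ψ(θ) = 0 for all θ ∈ [0,1). -/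
/-!
Write `∑_{s ∈ I} m_s / n_s = c(I) / N` with `c(I) = ∑_{s ∈ I} m_s N / n_s ∈ ℤ`. If `I₀` lies
in the class `θ`, that class is `{I : c(I) ≡ c(I₀) (mod N)}`, and orthogonality of the powers
of the primitive root `ζ` expresses `N ψ(θ)` through the twisted sums
`∑_I (-1)^{|I|} f(1_I) ∏_{s ∈ I} w_s` with `w_s = ζ^{(a_s + j) m_s N / n_s}`, `0 ≤ j < N`.
Expanding `f` in monomials, such a sum is
`∑_d f_d ∏_{s ∈ supp d} (-w_s) ∏_{s ∉ supp d} (1 - w_s)`.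
For `z = -j` we have `w_s = 1` on `I_z`, so only monomials with `I_z ⊆ supp d` survive, and
the bound `deg f ≤ |I_z|` leaves just `∏_{s ∈ I_z} x_s`, whose coefficient vanishes.
-/

open Finset MvPolynomial

namespace Finsupp

lemma eq_sum_single_one_of_subset_support {σ : Type*} [DecidableEq σ] {d : σ →₀ ℕ}
    {T : Finset σ} (hT : T ⊆ d.support) (hd : d.degree ≤ #T) : d = ∑ i ∈ T, single i 1 := by
  set e := ∑ i ∈ T, single i 1
  have he : e ≤ d := fun i => by
    by_cases hi : i ∈ T
    · simpa [e, finsetSum_apply, single_apply, hi, Nat.one_le_iff_ne_zero] using hT hi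
    · simp [e, finsetSum_apply, single_apply, hi]
  have hde : (d - e).degree = 0 := by
    have hsplit := congrArg degree (tsub_add_cancel_of_le he)
    have hdeg_e : e.degree = #T := by simp [e, map_sum]
    rw [map_add] at hsplit
    omega
  exact le_antisymm (tsub_eq_zero_iff_le.mp ((degree_eq_zero_iff _).mp hde)) he

end Finsupp

lemma zpow_sum₀ {ι G₀ : Type*} [CommGroupWithZero G₀] {x : G₀} (hx : x ≠ 0) (s : Finset ι)
    (e : ι → ℤ) : x ^ (∑ i ∈ s, e i) = ∏ i ∈ s, x ^ e i := by
  induction s using Finset.cons_induction with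
  | empty => simp
  | cons i s hi ih => rw [sum_cons, prod_cons, zpow_add₀ hx, ih]

lemma Int.fract_intCast_div_eq_iff {K : Type*} [Field K] [LinearOrder K]
    [IsStrictOrderedRing K] [FloorRing K] {N : ℕ} (hN : N ≠ 0) (u v : ℤ) :
    Int.fract ((u : K) / N) = Int.fract ((v : K) / N) ↔ (N : ℤ) ∣ u - v := by
  rw [Int.fract_div_intCast_eq_div_intCast_mod, Int.fract_div_intCast_eq_div_intCast_mod,
    div_left_inj' (Nat.cast_ne_zero.mpr hN), Int.cast_inj, ← Int.ModEq, Int.modEq_comm,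
    Int.modEq_iff_dvd]

lemma sum_intCast_div_natCast {K ι : Type*} [Field K] [CharZero K] (s : Finset ι)
    (m : ι → ℤ) {n : ι → ℕ} {N : ℕ} (hN : N ≠ 0) (hn : ∀ i ∈ s, n i ∣ N) :
    ∑ i ∈ s, (m i : K) / n i = ((∑ i ∈ s, m i * ((N / n i : ℕ) : ℤ) : ℤ) : K) / N := by
  rw [Int.cast_sum, sum_div]
  refine sum_congr rfl fun i hi => ?_
  have hni : (n i : K) ≠ 0 := Nat.cast_ne_zero.mpr (ne_zero_of_dvd_ne_zero hN (hn i hi))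
  rw [Int.cast_mul, Int.cast_natCast, Nat.cast_div (hn i hi) hni]
  field_simp

namespace Finset

variable {σ R : Type*} [Fintype σ] [DecidableEq σ] [CommRing R]

lemma sum_powerset_filter_superset_prod (S : Finset σ) (g : σ → R) :
    ∑ I ∈ univ.powerset with S ⊆ I, ∏ i ∈ I, g i =
      ∏ i, if i ∈ S then g i else 1 + g i := by
  calc ∑ I ∈ univ.powerset with S ⊆ I, ∏ i ∈ I, g i
      = ∑ I ∈ univ.powerset, (∏ i ∈ I, g i) * ∏ i ∈ univ \ I, if i ∈ S then 0 else 1 := by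
        rw [sum_filter]
        refine sum_congr rfl fun I _ => ?_
        by_cases hSI : S ⊆ I
        · rw [if_pos hSI, prod_eq_one fun i hi => if_neg fun hiS => (mem_sdiff.mp hi).2 (hSI hiS),
            mul_one]
        · obtain ⟨i, hiS, hiI⟩ := not_subset.mp hSI
          rw [if_neg hSI, prod_eq_zero (mem_sdiff.mpr ⟨mem_univ i, hiI⟩) (by rw [if_pos hiS]),
            mul_zero]
    _ = ∏ i, (g i + if i ∈ S then 0 else 1) := (prod_add _ _ _).symm
    _ = ∏ i, if i ∈ S then g i else 1 + g i := by
        refine prod_congr rfl fun i _ => ?_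
        split_ifs <;> ring

end Finset

namespace MvPolynomial

variable {σ R : Type*} [DecidableEq σ]

lemma eval_indicator [CommSemiring R] (f : MvPolynomial σ R) (I : Finset σ) :
    eval (fun i => if i ∈ I then 1 else 0) f =
      ∑ d ∈ f.support with d.support ⊆ I, coeff d f := by
  rw [eval_eq, sum_filter]
  refine sum_congr rfl fun d _ => ?_
  by_cases hdI : d.support ⊆ I
  · rw [if_pos hdI, prod_eq_one fun i hi => by rw [if_pos (hdI hi), one_pow], mul_one]
  · obtain ⟨i, hid, hiI⟩ := not_subset.mp hdI
    rw [if_neg hdI, mul_eq_zero_of_right _ (prod_eq_zero hid (by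
      rw [if_neg hiI, zero_pow (Finsupp.mem_support_iff.mp hid)]))]

variable [Fintype σ] [CommRing R]

lemma sum_powerset_neg_one_pow_mul_eval_indicator (f : MvPolynomial σ R) (w : σ → R) :
    ∑ I ∈ univ.powerset,
        (-1) ^ #I * eval (fun i => if i ∈ I then 1 else 0) f * ∏ i ∈ I, w i =
      ∑ d ∈ f.support, coeff d f * ∏ i, if i ∈ d.support then -w i else 1 - w i := by
  calc _ = ∑ I ∈ univ.powerset, ∑ d ∈ f.support,
        if d.support ⊆ I then coeff d f * ∏ i ∈ I, -w i else 0 := by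
        refine sum_congr rfl fun I _ => ?_
        rw [eval_indicator, sum_filter, prod_neg, mul_comm, ← mul_assoc, mul_sum]
        refine sum_congr rfl fun d _ => ?_
        split_ifs <;> ring
    _ = ∑ d ∈ f.support,
        coeff d f * ∑ I ∈ univ.powerset with d.support ⊆ I, ∏ i ∈ I, -w i := by
        rw [sum_comm]
        simp only [sum_filter, mul_sum, mul_ite, mul_zero]
    _ = _ := by simp only [sum_powerset_filter_superset_prod, ← sub_eq_add_neg]

lemma sum_powerset_neg_one_pow_mul_eval_indicator_eq_zero {f : MvPolynomial σ R} {w : σ → R}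
    {T : Finset σ} (hdeg : f.totalDegree ≤ #T)
    (hcoeff : coeff (∑ i ∈ T, Finsupp.single i 1) f = 0) (hw : ∀ i ∈ T, w i = 1) :
    ∑ I ∈ univ.powerset,
      (-1) ^ #I * eval (fun i => if i ∈ I then 1 else 0) f * ∏ i ∈ I, w i = 0 := by
  rw [sum_powerset_neg_one_pow_mul_eval_indicator]
  refine sum_eq_zero fun d hd => ?_
  by_cases hT : T ⊆ d.support
  · have hd_deg : d.degree ≤ #T := (le_totalDegree hd).trans hdeg
    rw [Finsupp.eq_sum_single_one_of_subset_support hT hd_deg, hcoeff, zero_mul]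
  · obtain ⟨i, hiT, hid⟩ := not_subset.mp hT
    exact mul_eq_zero_of_right _
      (prod_eq_zero (mem_univ i) (by rw [if_neg hid, hw i hiT, sub_self]))

end MvPolynomial

namespace IsPrimitiveRoot

variable {F : Type*} [Field F] {ζ : F} {N : ℕ}

lemma sum_range_zpow_mul (hζ : IsPrimitiveRoot ζ N) (t : ℤ) :
    ∑ j ∈ range N, ζ ^ ((j : ℤ) * t) = if (N : ℤ) ∣ t then (N : F) else 0 := by
  simp_rw [mul_comm (_ : ℤ) t, zpow_mul, zpow_natCast]
  split_ifs with ht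
  · simp [(hζ.zpow_eq_one_iff_dvd t).mpr ht]
  · have hζt : ζ ^ t ≠ 1 := mt (hζ.zpow_eq_one_iff_dvd t).mp ht
    rw [geom_sum_eq hζt, ← zpow_natCast, ← zpow_mul,
      (hζ.zpow_eq_one_iff_dvd _).mpr (dvd_mul_left _ _), sub_self, zero_div]

lemma natCast_mul_sum_filter_dvd_sub [NeZero N] (hζ : IsPrimitiveRoot ζ N) {ι : Type*}
    (s : Finset ι) (c : ι → ℤ) (r : ℤ) (g : ι → F) :
    (N : F) * ∑ i ∈ s with (N : ℤ) ∣ c i - r, g i =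
      ∑ j ∈ range N, ζ ^ (-((j : ℤ) * r)) * ∑ i ∈ s, g i * ζ ^ ((j : ℤ) * c i) := by
  have hζ0 : ζ ≠ 0 := hζ.ne_zero (NeZero.ne N)
  simp_rw [mul_sum, sum_filter]
  rw [sum_comm]
  refine sum_congr rfl fun i _ => ?_
  calc (if (N : ℤ) ∣ c i - r then (N : F) * g i else 0)
      = g i * ∑ j ∈ range N, ζ ^ ((j : ℤ) * (c i - r)) := by
        rw [hζ.sum_range_zpow_mul]; split_ifs <;> ring
    _ = _ := by
        rw [mul_sum]
        refine sum_congr rfl fun j _ => ?_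
        rw [mul_sub, sub_eq_add_neg, zpow_add₀ hζ0]; ring

lemma sum_filter_dvd_sub_eq_zero [NeZero N] (hζ : IsPrimitiveRoot ζ N) {ι : Type*}
    {s : Finset ι} {c : ι → ℤ} (r : ℤ) {g : ι → F}
    (h : ∀ j < N, ∑ i ∈ s, g i * ζ ^ ((j : ℤ) * c i) = 0) :
    ∑ i ∈ s with (N : ℤ) ∣ c i - r, g i = 0 := by
  refine (mul_eq_zero.mp ?_).resolve_left hζ.neZero'.out
  rw [hζ.natCast_mul_sum_filter_dvd_sub]
  exact sum_eq_zero fun j hj => by rw [h j (mem_range.mp hj), mul_zero]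

end IsPrimitiveRoot

/-- **Lemma 4.1, first direction** (Sun): Let `A = {a_s(n_s)}_{s=1}^k`, `N_A = lcm(n₁,…,n_k)`,
`I_z = {s : z ≡ a_s (mod n_s)}`, let `m₁,…,m_k ∈ ℤ`, let `F` be a field containing an
element `ζ` of multiplicative order `N_A`, and let `f` be a polynomial over `F` with
`deg f ≤ m(A)`.  For `θ ∈ [0,1)` let
`ψ(θ) = ∑_{I ⊆ [1,k], {∑_{s∈I} m_s/n_s} = θ} (-1)^{|I|} f([[1∈I]],…,[[k∈I]]) ζ^{N_A ∑_{s∈I} a_s m_s/n_s}`.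
If the coefficient of `∏_{s∈I_z} x_s` in `f` vanishes for every `z ∈ ℤ`, then `ψ(θ) = 0`
for all `θ ∈ [0,1)`. -/
theorem sun_lemma4_1_forward (k : ℕ) (a : Fin k → ℤ) (n : Fin k → ℕ) (hn : ∀ s, 0 < n s)
    (N : ℕ) (hN : N = Finset.univ.lcm n)
    (m : Fin k → ℤ)
    (F : Type*) [Field F] (ζ : F) (hζ : orderOf ζ = N)
    (f : MvPolynomial (Fin k) F)
    -- `deg f ≤ m(A)`, the covering multiplicity of `A`:
    (hdeg : ∀ z : ℤ, f.totalDegree ≤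
      (Finset.univ.filter (fun s : Fin k => (n s : ℤ) ∣ z - a s)).card)
    -- the coefficient of `∏_{s ∈ I_z} x_s` in `f` is zero for all `z`:
    (hcoeff : ∀ z : ℤ, MvPolynomial.coeff
      (∑ s ∈ Finset.univ.filter (fun s : Fin k => (n s : ℤ) ∣ z - a s),
        Finsupp.single s 1) f = 0) :
    ∀ θ : ℝ, 0 ≤ θ → θ < 1 →
      (∑ I ∈ (Finset.univ : Finset (Fin k)).powerset.filter
          (fun I => Int.fract (∑ s ∈ I, (m s : ℝ) / (n s : ℝ)) = θ),
        (-1 : F) ^ I.card *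
          MvPolynomial.eval (fun s => if s ∈ I then (1 : F) else 0) f *
          ζ ^ (∑ s ∈ I, a s * m s * ((N / n s : ℕ) : ℤ))) = 0 := by
  intro θ _ _
  have hN0 : N ≠ 0 := hN ▸ lcm_ne_zero_iff.mpr fun s _ => (hn s).ne'
  have hdvd (s : Fin k) : n s ∣ N := hN ▸ dvd_lcm (mem_univ s)
  have : NeZero N := ⟨hN0⟩
  have hprim : IsPrimitiveRoot ζ N := hζ ▸ IsPrimitiveRoot.orderOf ζ
  set c : Finset (Fin k) → ℤ := fun I => ∑ s ∈ I, m s * ((N / n s : ℕ) : ℤ)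
  obtain hempty | ⟨I₀, hI₀⟩ := (univ.powerset.filter
      (fun I => Int.fract (∑ s ∈ I, (m s : ℝ) / (n s : ℝ)) = θ)).eq_empty_or_nonempty
  · rw [hempty, sum_empty]
  obtain ⟨-, rfl⟩ := mem_filter.mp hI₀
  rw [filter_congr fun I _ => by
    rw [sum_intCast_div_natCast I m hN0 fun s _ => hdvd s,
      sum_intCast_div_natCast I₀ m hN0 fun s _ => hdvd s, Int.fract_intCast_div_eq_iff hN0]]
  refine hprim.sum_filter_dvd_sub_eq_zero (c I₀) fun j _ => ?_
  set w : Fin k → F := fun s => ζ ^ ((a s + j) * (m s * ((N / n s : ℕ) : ℤ)))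
  have hw : ∀ s ∈ univ.filter (fun s : Fin k => (n s : ℤ) ∣ -(j : ℤ) - a s), w s = 1 := by
    intro s hs
    obtain ⟨q, hq⟩ := (mem_filter.mp hs).2
    have hNs : (N : ℤ) = n s * ((N / n s : ℕ) : ℤ) := by
      exact_mod_cast (Nat.mul_div_cancel' (hdvd s)).symm
    refine (hprim.zpow_eq_one_iff_dvd _).mpr ?_
    rw [hNs, show a s + j = n s * -q by linarith]
    exact mul_dvd_mul (dvd_mul_right _ _) (dvd_mul_left _ _)
  refine (sum_congr rfl fun I _ => ?_).trans
    (sum_powerset_neg_one_pow_mul_eval_indicator_eq_zero (hdeg (-j)) (hcoeff (-j)) hw)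
  rw [mul_assoc, ← zpow_add₀ (hprim.ne_zero hN0), ← zpow_sum₀ (hprim.ne_zero hN0), mul_sum,
    ← sum_add_distrib]
  congr 2
  exact sum_congr rfl fun s _ => by ring
end

section
/- Let A = {a_s(n_s)}_{s=1}^k be a finite system of residue classes, set N_A = lcm(n_1,...,n_k), and for z ∈ ℤ set I_z = {1 ≤ s ≤ k : z ≡ a_s (mod n_s)}. Let m_1,...,m_k be integers with gcd(m_s,n_s) = 1 for each s, let F be a field containing an element ζ of multiplicative order N_A, and let f(x_1,...,x_k) be a polynomial over F with deg f ≤ m(A). For θ ∈ [0,1) define ψ(θ) = ∑ (−1)^{|I|} f([[1∈I]],...,[[k∈I]]) ζ^{N_A ∑_{s∈I} a_s m_s/n_s}, the sum over all I ⊆ {1,...,k} with fractional part {∑_{s∈I} m_s/n_s} = θ. If ψ(θ) = 0 for all θ ∈ [0,1), then for every z ∈ ℤ the coefficient of the monomial ∏_{s∈I_z} x_s in f is zero. -/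
/-!
Put `w s = ζ ^ ((a s - z) * m s * (N / n s))`; as `m s` is prime to `n s`, `w s = 1` exactly
when `s ∈ I_z`. The product `∏ s ∈ I, w s` differs from the power of `ζ` in `ψ` by the factor
`ζ ^ (-z * N * ∑ s ∈ I, m s / n s)`, which depends only on `{∑ s ∈ I, m s / n s}`; grouping the
subsets by this fractional part, `ψ ≡ 0` gives `∑ I, (-1) ^ |I| * f(1_I) * ∏ s ∈ I, w s = 0`.
Expanding `f` into monomials `x^d` and summing over `I ⊇ supp d` turns this into
`∑ d, c_d * ∏ s ∈ supp d, (-w s) * ∏ s ∉ supp d, (1 - w s) = 0`. A monomial whose support misses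
some `s ∈ I_z` is killed by the factor `1 - w s`, and one whose support contains `I_z` has
degree at most `deg f ≤ m(A) ≤ |I_z|`, so it is `∏ s ∈ I_z, x_s`. That single term survives, with
a nonzero factor, so its coefficient vanishes.
-/

open Finset

theorem IsPrimitiveRoot.zpow_eq_zpow_of_modEq {G₀ : Type*} [CommGroupWithZero G₀] {ζ : G₀}
    {N : ℕ} (h : IsPrimitiveRoot ζ N) (hN : N ≠ 0) {x y : ℤ} (hxy : x ≡ y [ZMOD N]) :
    ζ ^ x = ζ ^ y := by
  rw [← sub_add_cancel x y, zpow_add₀ (h.ne_zero hN),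
    (h.zpow_eq_one_iff_dvd _).2 (Int.modEq_iff_dvd.1 hxy.symm), one_mul]

theorem IsPrimitiveRoot.zpow_mul_mul_div_eq_one_iff {G : Type*} [DivisionCommMonoid G] {ζ : G}
    {N n : ℕ} (h : IsPrimitiveRoot ζ N) (hN : N ≠ 0) (hnN : n ∣ N) {m : ℤ}
    (hm : IsCoprime m n) (x : ℤ) :
    ζ ^ (x * (m * (N / n : ℕ))) = 1 ↔ (n : ℤ) ∣ x := by
  obtain ⟨q, rfl⟩ := hnN
  obtain ⟨hn, hq⟩ := mul_ne_zero_iff.1 hN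
  rw [Nat.mul_div_cancel_left q (Nat.pos_of_ne_zero hn), h.zpow_eq_one_iff_dvd, Nat.cast_mul,
    ← mul_assoc, mul_dvd_mul_iff_right (Int.natCast_ne_zero.2 hq)]
  exact ⟨hm.symm.dvd_of_dvd_mul_right, fun hx => hx.mul_right m⟩

theorem Int.modEq_of_fract_div_eq {k : Type*} [Field k] [LinearOrder k] [IsStrictOrderedRing k]
    [FloorRing k] {N x y : ℤ} (hN : N ≠ 0)
    (h : fract ((x : k) / N) = fract ((y : k) / N)) : x ≡ y [ZMOD N] := by
  obtain ⟨z, hz⟩ := Int.fract_eq_fract.1 h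
  rw [← sub_div, div_eq_iff (Int.cast_ne_zero.2 hN)] at hz
  exact (Int.modEq_iff_dvd.2 ⟨z, by rw [mul_comm]; exact_mod_cast hz⟩).symm

theorem Finset.sum_intCast_div_natCast_eq_of_dvd {ι k : Type*} [Field k] [CharZero k]
    (s : Finset ι) (m : ι → ℤ) {n : ι → ℕ} {N : ℕ} (hN : N ≠ 0) (hn : ∀ i ∈ s, n i ∣ N) :
    ∑ i ∈ s, (m i : k) / n i = ((∑ i ∈ s, m i * (N / n i : ℕ) : ℤ) : k) / N := by
  rw [Int.cast_sum, sum_div]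
  refine sum_congr rfl fun i hi => ?_
  obtain ⟨q, hq⟩ := hn i hi
  obtain ⟨hn0, hq0⟩ := mul_ne_zero_iff.1 (hq ▸ hN)
  rw [hq, Nat.mul_div_cancel_left q (Nat.pos_of_ne_zero hn0)]
  push_cast
  field_simp

theorem Finset.prod_zpow_eq_zpow_sum {ι G₀ : Type*} [CommGroupWithZero G₀] {x : G₀}
    (hx : x ≠ 0) (s : Finset ι) (g : ι → ℤ) :
    ∏ i ∈ s, x ^ g i = x ^ ∑ i ∈ s, g i := by
  induction s using Finset.cons_induction with
  | empty => simp
  | cons a s ha ih => rw [prod_cons, sum_cons, ih, zpow_add₀ hx]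

theorem Finset.sum_mul_eq_zero_of_sum_fiber_eq_zero {ι κ R : Type*} [DecidableEq κ]
    [NonUnitalNonAssocSemiring R] {s : Finset ι} (p : ι → κ) (g h : ι → R)
    (hh : ∀ i ∈ s, ∀ j ∈ s, p i = p j → h i = h j)
    (hg : ∀ i ∈ s, ∑ j ∈ s with p j = p i, g j = 0) :
    ∑ i ∈ s, g i * h i = 0 := by
  rw [← sum_fiberwise_of_maps_to (t := s.image p) fun i hi => mem_image_of_mem p hi]
  refine sum_eq_zero fun k hk => ?_
  obtain ⟨i, hi, rfl⟩ := mem_image.1 hk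
  rw [sum_congr rfl fun j hj => by rw [hh j (mem_filter.1 hj).1 i hi (mem_filter.1 hj).2],
    ← sum_mul, hg i hi, zero_mul]

theorem Finset.sum_superset_prod_neg {σ R : Type*} [Fintype σ] [DecidableEq σ] [CommRing R]
    (T : Finset σ) (w : σ → R) :
    ∑ I ∈ univ.powerset with T ⊆ I, ∏ s ∈ I, -w s
      = ∏ s, if s ∈ T then -w s else 1 - w s := by
  have hsplit : ∀ s, (if s ∈ T then -w s else 1 - w s) = -w s + if s ∉ T then 1 else 0 := by
    intro s
    split_ifs <;> ring
  rw [prod_congr rfl fun s _ => hsplit s, prod_add, sum_filter]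
  refine sum_congr rfl fun I _ => ?_
  rw [prod_boole]
  have hcond : (∀ s ∈ univ \ I, s ∉ T) ↔ T ⊆ I := by
    simp only [mem_sdiff, mem_univ, true_and]
    exact ⟨fun h s hs => by_contra fun hI => h s hI hs, fun h s hI hs => hI (h hs)⟩
  simp only [hcond, mul_ite, mul_one, mul_zero]

theorem MvPolynomial.eval_indicator_s18 {σ R : Type*} [DecidableEq σ] [CommSemiring R]
    (f : MvPolynomial σ R) (I : Finset σ) :
    eval (fun s => if s ∈ I then 1 else 0) f = ∑ d ∈ f.support with d.support ⊆ I, coeff d f := by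
  rw [eval_eq, sum_filter]
  refine sum_congr rfl fun d _ => ?_
  split_ifs with h
  · rw [prod_eq_one fun i hi => by rw [if_pos (h hi), one_pow], mul_one]
  · obtain ⟨i, hi, hiI⟩ := not_subset.1 h
    rw [prod_eq_zero hi (by rw [if_neg hiI, zero_pow (Finsupp.mem_support_iff.1 hi)]), mul_zero]

theorem MvPolynomial.sum_powerset_eval_indicator_mul_prod {σ R : Type*} [Fintype σ]
    [DecidableEq σ] [CommRing R] (f : MvPolynomial σ R) (w : σ → R) :
    ∑ I ∈ univ.powerset, (-1) ^ #I * eval (fun s => if s ∈ I then 1 else 0) f * ∏ s ∈ I, w s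
      = ∑ d ∈ f.support, coeff d f * ∏ s, if s ∈ d.support then -w s else 1 - w s := by
  calc _ = ∑ I ∈ univ.powerset, ∑ d ∈ f.support,
          if d.support ⊆ I then coeff d f * ∏ s ∈ I, -w s else 0 := by
        refine sum_congr rfl fun I _ => ?_
        rw [eval_indicator_s18, sum_filter, prod_neg, mul_sum, sum_mul]
        refine sum_congr rfl fun d _ => ?_
        split_ifs <;> ring
    _ = ∑ d ∈ f.support, coeff d f * ∑ I ∈ univ.powerset with d.support ⊆ I, ∏ s ∈ I, -w s := by
        rw [sum_comm]
        simp only [mul_sum, sum_filter, mul_ite, mul_zero]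
    _ = _ := by simp only [sum_superset_prod_neg]

theorem Finsupp.eq_sum_single_one_of_subset_support_s18 {σ : Type*} {d : σ →₀ ℕ} {T : Finset σ}
    (hT : T ⊆ d.support) (hd : d.degree ≤ #T) : d = ∑ s ∈ T, single s 1 := by
  have hone : ∀ s ∈ d.support, 1 ≤ d s := fun s hs =>
    Nat.one_le_iff_ne_zero.2 (mem_support_iff.1 hs)
  have hcard : #d.support ≤ d.degree := by
    rw [card_eq_sum_ones, degree_apply]; exact Finset.sum_le_sum hone
  have hsupp : T = d.support := eq_of_subset_of_card_le hT (hcard.trans hd)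
  have hsum : ∑ s ∈ d.support, 1 = ∑ s ∈ d.support, d s := by
    rw [← card_eq_sum_ones, ← degree_apply, ← hsupp]
    exact le_antisymm (hsupp ▸ hcard) hd
  have hval := (sum_eq_sum_iff_of_le hone).1 hsum
  classical
  ext i
  simp only [finsetSum_apply, single_apply, Finset.sum_ite_eq']
  split_ifs with hi
  · exact (hval i (hsupp ▸ hi)).symm
  · exact notMem_support_iff.1 (hsupp ▸ hi)

theorem MvPolynomial.coeff_sum_single_eq_zero_of_sum_powerset_eq_zero {σ R : Type*}
    [Fintype σ] [DecidableEq σ] [CommRing R] [IsDomain R] {f : MvPolynomial σ R} {w : σ → R}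
    {T : Finset σ}
    (hw : ∀ s, w s = 1 ↔ s ∈ T) (hdeg : f.totalDegree ≤ #T)
    (h : ∑ I ∈ univ.powerset,
      (-1) ^ #I * eval (fun s => if s ∈ I then 1 else 0) f * ∏ s ∈ I, w s = 0) :
    coeff (∑ s ∈ T, Finsupp.single s 1) f = 0 := by
  set M : σ →₀ ℕ := ∑ s ∈ T, Finsupp.single s 1
  by_cases hM : M ∈ f.support
  swap
  · exact notMem_support_iff.1 hM
  have hMsupp : M.support = T := by
    ext i
    simp [M, Finsupp.finsetSum_apply, Finsupp.single_apply]
  have hother : ∀ d ∈ f.support, d ≠ M →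
      coeff d f * ∏ s, (if s ∈ d.support then -w s else 1 - w s) = 0 := by
    intro d hd hne
    obtain ⟨s, hsT, hsd⟩ := not_subset.1 fun hT =>
      hne (Finsupp.eq_sum_single_one_of_subset_support_s18 hT ((le_totalDegree hd).trans hdeg))
    rw [prod_eq_zero (mem_univ s) (by rw [if_neg hsd, (hw s).2 hsT, sub_self]), mul_zero]
  rw [sum_powerset_eval_indicator_mul_prod, sum_eq_single_of_mem M hM hother] at h
  refine (mul_eq_zero.1 h).resolve_right (prod_ne_zero_iff.2 fun s _ => ?_)
  rw [hMsupp]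
  split_ifs with hs
  · rw [(hw s).2 hs]
    exact neg_ne_zero.2 one_ne_zero
  · exact sub_ne_zero.2 (Ne.symm (mt (hw s).1 hs))

open scoped Classical

/-- **Lemma 4.1, converse direction** (Sun): Let `A = {a_s(n_s)}_{s=1}^k`,
`N_A = lcm(n₁,…,n_k)`, `I_z = {s : z ≡ a_s (mod n_s)}`, let `m₁,…,m_k` be integers coprime
to `n₁,…,n_k` respectively, let `F` be a field containing an element `ζ` of multiplicative
order `N_A`, and let `f` be a polynomial over `F` with `deg f ≤ m(A)`.  For `θ ∈ [0,1)` let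
`ψ(θ) = ∑_{I ⊆ [1,k], {∑_{s∈I} m_s/n_s} = θ} (-1)^{|I|} f([[1∈I]],…,[[k∈I]]) ζ^{N_A ∑_{s∈I} a_s m_s/n_s}`.
If `ψ(θ) = 0` for all `θ ∈ [0,1)`, then the coefficient of `∏_{s∈I_z} x_s` in `f` vanishes
for every `z ∈ ℤ`. -/
theorem sun_lemma4_1_converse (k : ℕ) (a : Fin k → ℤ) (n : Fin k → ℕ) (hn : ∀ s, 0 < n s)
    (N : ℕ) (hN : N = Finset.univ.lcm n)
    (m : Fin k → ℤ) (hm : ∀ s, IsCoprime (m s) (n s : ℤ))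
    (F : Type*) [Field F] (ζ : F) (hζ : orderOf ζ = N)
    (f : MvPolynomial (Fin k) F)
    -- `deg f ≤ m(A)`, the covering multiplicity of `A`:
    (hdeg : ∀ z : ℤ, f.totalDegree ≤
      (Finset.univ.filter (fun s : Fin k => (n s : ℤ) ∣ z - a s)).card)
    -- `ψ(θ) = 0` for all `θ ∈ [0,1)`:
    (hpsi : ∀ θ : ℝ, 0 ≤ θ → θ < 1 →
      (∑ I ∈ (Finset.univ : Finset (Fin k)).powerset.filter
          (fun I => Int.fract (∑ s ∈ I, (m s : ℝ) / (n s : ℝ)) = θ),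
        (-1 : F) ^ I.card *
          MvPolynomial.eval (fun s => if s ∈ I then (1 : F) else 0) f *
          ζ ^ (∑ s ∈ I, a s * m s * ((N / n s : ℕ) : ℤ))) = 0) :
    ∀ z : ℤ, MvPolynomial.coeff
      (∑ s ∈ Finset.univ.filter (fun s : Fin k => (n s : ℤ) ∣ z - a s),
        Finsupp.single s 1) f = 0 := by
  intro z
  have hN0 : N ≠ 0 := hN ▸ fun h0 => by
    obtain ⟨s, -, hs⟩ := Finset.lcm_eq_zero_iff.1 h0
    exact (hn s).ne' hs
  have hnN : ∀ s, n s ∣ N := fun s => hN ▸ Finset.dvd_lcm (mem_univ s)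
  have hprim : IsPrimitiveRoot ζ N := hζ ▸ IsPrimitiveRoot.orderOf ζ
  have hζ0 : ζ ≠ 0 := hprim.ne_zero hN0
  set c : Fin k → ℤ := fun s => m s * (N / n s : ℕ)
  set w : Fin k → F := fun s => ζ ^ ((a s - z) * c s)
  have hw : ∀ s, w s = 1 ↔ s ∈ univ.filter fun s : Fin k => (n s : ℤ) ∣ z - a s := fun s => by
    rw [hprim.zpow_mul_mul_div_eq_one_iff hN0 (hnN s) (hm s), mem_filter, dvd_sub_comm]
    simp
  have hprod : ∀ I : Finset (Fin k), ∏ s ∈ I, w s =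
      ζ ^ (∑ s ∈ I, a s * m s * ((N / n s : ℕ) : ℤ)) * ζ ^ (-(z * ∑ s ∈ I, c s)) := fun I => by
    rw [prod_zpow_eq_zpow_sum hζ0, ← zpow_add₀ hζ0, mul_sum, ← sum_neg_distrib,
      ← sum_add_distrib]
    exact congrArg _ (sum_congr rfl fun s _ => by ring)
  have hstar : ∑ I ∈ univ.powerset,
      (-1) ^ #I * MvPolynomial.eval (fun s => if s ∈ I then 1 else 0) f * ∏ s ∈ I, w s = 0 := by
    simp only [hprod, ← mul_assoc]
    refine sum_mul_eq_zero_of_sum_fiber_eq_zero (fun I => Int.fract (∑ s ∈ I, (m s : ℝ) / n s))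
      _ _ (fun I _ J _ hIJ => ?_) fun I _ => hpsi _ (Int.fract_nonneg _) (Int.fract_lt_one _)
    refine hprim.zpow_eq_zpow_of_modEq hN0 ((Int.ModEq.mul_left z ?_).neg)
    refine Int.modEq_of_fract_div_eq (k := ℝ) (Int.natCast_ne_zero.2 hN0) ?_
    simpa only [sum_intCast_div_natCast_eq_of_dvd _ m hN0 fun s _ => hnN s, Int.cast_natCast]
      using hIJ
  exact MvPolynomial.coeff_sum_single_eq_zero_of_sum_powerset_eq_zero hw (hdeg z) hstar
end
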